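/- arXiv:2112.12316 — 2 statements merged into one kernel-verified Lean document; each statement's English description precedes it below -/
import Mathlib

section
/- Fix b > 0 and 0 < ρ < 1. With U_Y^MIN(a) = log(b/a) and I(T;Y)(a) = -log a + log √(a² + b² + 2ρab) - log √(1-ρ²), the ratio U_Y^MIN(a) / I(T;Y)(a) → 1 as a → 0⁺. -/
open Real Filter

/-- The ratio `U_Y^MIN / I(T;Y)` tends to `1` as `a → 0⁺`. -/
theorem uminY_ratio_limit (b ρ : ℝ) (hb : 0 < b) (hρ : 0 < ρ) (hρ1 : ρ < 1) :
    Tendsto (fun a : ℝ =>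
        Real.log (b / a) /
          (-Real.log a + Real.log (Real.sqrt (a^2 + b^2 + 2*ρ*a*b))
            - Real.log (Real.sqrt (1 - ρ^2))))
      (nhdsWithin 0 (Set.Ioi 0)) (nhds 1) := by
  set f : ℝ → ℝ := fun a =>
    Real.log (Real.sqrt (a^2 + b^2 + 2*ρ*a*b)) - Real.log (Real.sqrt (1 - ρ^2)) with hfdef
  set g : ℝ → ℝ := fun a => -Real.log a with hgdef
  set L : ℝ := f 0 with hL
  -- g → atTop
  have hg : Tendsto g (nhdsWithin 0 (Set.Ioi 0)) atTop := by
    have := Real.tendsto_log_nhdsGT_zero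
    exact tendsto_neg_atTop_iff.mpr this
  have hginv : Tendsto (fun a => (g a)⁻¹) (nhdsWithin 0 (Set.Ioi 0)) (nhds 0) :=
    hg.inv_tendsto_atTop
  -- f continuous at 0
  have hf : Tendsto f (nhdsWithin 0 (Set.Ioi 0)) (nhds L) := by
    have hpoly : ContinuousAt (fun a : ℝ => a^2 + b^2 + 2*ρ*a*b) 0 := by fun_prop
    have hsq : ContinuousAt (fun a : ℝ => Real.sqrt (a^2 + b^2 + 2*ρ*a*b)) 0 :=
      Real.continuous_sqrt.continuousAt.comp hpoly
    have hval : Real.sqrt ((0:ℝ)^2 + b^2 + 2*ρ*0*b) ≠ 0 := by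
      simp only [zero_pow, mul_zero, zero_mul, add_zero, zero_add, ne_eq]
      positivity
    have hlog : ContinuousAt (fun a : ℝ => Real.log (Real.sqrt (a^2 + b^2 + 2*ρ*a*b))) 0 :=
      hsq.log hval
    have : ContinuousAt f 0 := hlog.sub continuousAt_const
    exact this.continuousWithinAt.tendsto
  -- f + g → atTop, so eventually positive
  have hfg : Tendsto (fun a => f a + g a) (nhdsWithin 0 (Set.Ioi 0)) atTop :=
    hf.add_atTop hg
  have hfg_pos : ∀ᶠ a in nhdsWithin 0 (Set.Ioi 0), 0 < f a + g a :=
    hfg.eventually (eventually_gt_atTop 0)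
  -- main limit of the rewritten expression
  have hmain : Tendsto (fun a => (Real.log b * (g a)⁻¹ + 1) / (f a * (g a)⁻¹ + 1))
      (nhdsWithin 0 (Set.Ioi 0)) (nhds 1) := by
    have hnum : Tendsto (fun a => Real.log b * (g a)⁻¹ + 1)
        (nhdsWithin 0 (Set.Ioi 0)) (nhds 1) := by
      have := (tendsto_const_nhds (x := Real.log b)).mul hginv |>.add
        (tendsto_const_nhds (x := (1:ℝ)))
      simpa using this
    have hden : Tendsto (fun a => f a * (g a)⁻¹ + 1)
        (nhdsWithin 0 (Set.Ioi 0)) (nhds 1) := by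
      have := (hf.mul hginv).add (tendsto_const_nhds (x := (1:ℝ)))
      simpa using this
    have := hnum.div hden one_ne_zero
    rw [div_one] at this; exact this
  -- eventual equality
  have hmem : Set.Ioo (0:ℝ) 1 ∈ nhdsWithin 0 (Set.Ioi 0) :=
    Ioo_mem_nhdsGT_of_mem ⟨le_refl 0, one_pos⟩
  refine hmain.congr' ?_
  filter_upwards [hmem, hfg_pos] with a ha hapos
  have ha0 : 0 < a := ha.1
  have hga : 0 < g a := by
    simp only [hgdef]
    simpa using Real.log_neg ha0 ha.2
  have hga' : g a ≠ 0 := ne_of_gt hga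
  have hfga : f a + g a ≠ 0 := ne_of_gt hapos
  have hnumeq : Real.log (b / a) = Real.log b + g a := by
    rw [Real.log_div hb.ne' ha0.ne']; simp [hgdef]; ring
  have hdeneq : -Real.log a + Real.log (Real.sqrt (a^2 + b^2 + 2*ρ*a*b))
      - Real.log (Real.sqrt (1 - ρ^2)) = f a + g a := by
    simp only [hfdef, hgdef]; ring
  have hden_ne : f a * (g a)⁻¹ + 1 ≠ 0 := by
    have : f a * (g a)⁻¹ + 1 = (f a + g a) / g a := by field_simp
    rw [this]
    exact div_ne_zero hfga hga'
  rw [hnumeq, hdeneq, eq_comm, div_eq_div_iff hfga hden_ne]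
  field_simp
end

section
/- Fix b > 0 and 0 < ρ < 1. With U_Y^MIN(a) = log(b/a) and R^PM(a) = -log a + log √(a²+b²+2ρab) - log √(1-ρ²) - (1/π)√(1-ρ²), the ratio U_Y^MIN(a)/R^PM(a) → 1 as a → 0⁺. -/
open Real Filter
open scoped Topology

/-- The ratio `U_Y^MIN / R^PM` tends to `1` as `a → 0⁺`. -/
theorem uminY_rpm_ratio_limit (b ρ : ℝ) (hb : 0 < b) (hρ : 0 < ρ) (hρ1 : ρ < 1) :
    Tendsto (fun a : ℝ =>
        Real.log (b / a) /
          (-Real.log a + Real.log (Real.sqrt (a^2 + b^2 + 2*ρ*a*b))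
            - Real.log (Real.sqrt (1 - ρ^2)) - (1/Real.pi) * Real.sqrt (1 - ρ^2)))
      (nhdsWithin 0 (Set.Ioi 0)) (nhds 1) := by
  set g : ℝ → ℝ := fun a => Real.log (Real.sqrt (a^2 + b^2 + 2*ρ*a*b))
      - Real.log (Real.sqrt (1 - ρ^2)) - (1/Real.pi) * Real.sqrt (1 - ρ^2) with hgdef
  have h1 : Tendsto (fun a : ℝ => -Real.log a) (𝓝[>] (0:ℝ)) atTop :=
    tendsto_neg_atBot_atTop.comp Real.tendsto_log_nhdsGT_zero
  have hinv : Tendsto (fun a : ℝ => (-Real.log a)⁻¹) (𝓝[>] (0:ℝ)) (𝓝 0) :=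
    h1.inv_tendsto_atTop
  have hgc : Tendsto g (𝓝[>] (0:ℝ)) (𝓝 (g 0)) := by
    have hne : (fun a : ℝ => Real.sqrt (a^2 + b^2 + 2*ρ*a*b)) 0 ≠ 0 := by
      have h0 : ((0:ℝ)^2 + b^2 + 2*ρ*0*b) = b^2 := by ring
      simp only [h0]
      rw [Real.sqrt_sq hb.le]; exact hb.ne'
    have hsq : ContinuousAt (fun a : ℝ => Real.sqrt (a^2 + b^2 + 2*ρ*a*b)) 0 := by
      fun_prop
    have hc : ContinuousAt g 0 := by
      rw [hgdef]
      exact ((hsq.log hne).sub continuousAt_const).sub continuousAt_const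
    exact hc.tendsto.mono_left nhdsWithin_le_nhds
  have key : Tendsto (fun a : ℝ =>
      (Real.log b * (-Real.log a)⁻¹ + 1) / (g a * (-Real.log a)⁻¹ + 1))
      (𝓝[>] (0:ℝ)) (𝓝 1) := by
    have hnum : Tendsto (fun a : ℝ => Real.log b * (-Real.log a)⁻¹ + 1) (𝓝[>] (0:ℝ))
        (𝓝 (Real.log b * 0 + 1)) := (tendsto_const_nhds.mul hinv).add tendsto_const_nhds
    have hden : Tendsto (fun a : ℝ => g a * (-Real.log a)⁻¹ + 1) (𝓝[>] (0:ℝ))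
        (𝓝 (g 0 * 0 + 1)) := (hgc.mul hinv).add tendsto_const_nhds
    have := hnum.div hden (by norm_num)
    convert this using 2 <;> simp
  refine key.congr' ?_
  filter_upwards [Ioo_mem_nhdsGT (by norm_num : (0:ℝ) < 1)] with a ha
  have ha0 : 0 < a := ha.1
  have ht : 0 < -Real.log a := by
    have := Real.log_neg ha0 ha.2; linarith
  have ht' : (-Real.log a)⁻¹ ≠ 0 := by positivity
  have hla : Real.log a ≠ 0 := ne_of_lt (Real.log_neg ha0 ha.2)
  have hnum_eq : Real.log (b / a) = Real.log b + (-Real.log a) := by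
    rw [Real.log_div hb.ne' ha0.ne']; ring
  have hden_eq : -Real.log a + Real.log (Real.sqrt (a^2 + b^2 + 2*ρ*a*b))
      - Real.log (Real.sqrt (1 - ρ^2)) - (1/Real.pi) * Real.sqrt (1 - ρ^2)
      = g a + (-Real.log a) := by rw [hgdef]; ring
  have e1 : Real.log b * (-Real.log a)⁻¹ + 1
      = (Real.log b + (-Real.log a)) * (-Real.log a)⁻¹ := by
    rw [add_mul, mul_inv_cancel₀ (ne_of_gt ht)]
  have e2 : g a * (-Real.log a)⁻¹ + 1
      = (g a + (-Real.log a)) * (-Real.log a)⁻¹ := by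
    rw [add_mul, mul_inv_cancel₀ (ne_of_gt ht)]
  rw [e1, e2, mul_div_mul_right _ _ ht', hnum_eq, hden_eq]
end
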